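/- arXiv:math/0606004 — 2 statements merged into one kernel-verified Lean document; each statement's English description precedes it below -/
import Mathlib

section
/- Let G be a group, let 𝒫 = G^{[2,1]} and 𝒬 = G^{[3,2]}. Then (𝒫,𝒬) is a weak parallelepiped structure on G, and this structure is strong if and only if G is 2-step nilpotent (i.e. G₃ = {1}). -/
open scoped Pointwise

namespace HK

/-- Quadruples of elements of `X`, indexed by the vertices `00, 01, 10, 11` of the square. -/
abbrev Quad (X : Type) := X × X × X × X

/-- Vertices of the cube `{0,1}³`. -/
abbrev Vtx := Fin 3 → Bool

/-- Elements of `X^{[3]} = X⁸`, indexed by the vertices of the cube. -/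
abbrev Cube (X : Type) := Vtx → X

variable {X Y : Type}

/-- Apply a map coordinatewise to a quadruple. -/
def map4 (f : X → Y) (p : Quad X) : Quad Y := (f p.1, f p.2.1, f p.2.2.1, f p.2.2.2)

/-- Apply a map coordinatewise to a cube. -/
def mapCube (f : X → Y) (x : Cube X) : Cube Y := fun v => f (x v)

/-- A weak parallelogram structure: the relation `(x00,x01) ∼ (x10,x11) ↔ (x00,x01,x10,x11) ∈ P`
is an equivalence relation, `P` is invariant under exchanging the two middle entries, and
any three points can be completed to a parallelogram. -/
def IsWeakParallelogram (P : Set (Quad X)) : Prop :=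
  (∀ a b : X, (a, b, a, b) ∈ P) ∧
  (∀ a b c d : X, (a, b, c, d) ∈ P → (c, d, a, b) ∈ P) ∧
  (∀ a b c d e f : X, (a, b, c, d) ∈ P → (c, d, e, f) ∈ P → (a, b, e, f) ∈ P) ∧
  (∀ a b c d : X, (a, b, c, d) ∈ P → (a, c, b, d) ∈ P) ∧
  (∀ a b c : X, ∃ d, (a, b, c, d) ∈ P)

/-- A strong parallelogram structure: the completing fourth point is unique. -/
def IsStrongParallelogram (P : Set (Quad X)) : Prop :=
  IsWeakParallelogram P ∧ ∀ a b c : X, ∃! d, (a, b, c, d) ∈ P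

/-- The entry of a quadruple at a vertex of the square. -/
def quadAt (p : Quad X) : Bool → Bool → X
  | false, false => p.1
  | false, true => p.2.1
  | true, false => p.2.2.1
  | true, true => p.2.2.2

/-- The cube whose face `ε₁ = 0` is `p` and whose face `ε₁ = 1` is `q`. -/
def joinQuad (p q : Quad X) : Cube X :=
  fun v => if v 0 = false then quadAt p (v 1) (v 2) else quadAt q (v 1) (v 2)

/-- The vertex of the cube with value `b` at coordinate `i` and values `u,v` at the two
remaining coordinates, taken in increasing order. -/
def insert3 (i : Fin 3) (b u v : Bool) : Vtx :=
  if i = 0 then ![b, u, v] else if i = 1 then ![u, b, v] else ![u, v, b]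

/-- The face `{v : v i = b}` of a cube, as a quadruple in lexicographic order. -/
def face (x : Cube X) (i : Fin 3) (b : Bool) : Quad X :=
  (x (insert3 i b false false), x (insert3 i b false true),
   x (insert3 i b true false), x (insert3 i b true true))

/-- The permutations of the vertices of the cube induced by Euclidean isometries of the unit
cube: a permutation of the three coordinates composed with flips of some coordinates. -/
def cubeSym (σ : Equiv.Perm (Fin 3)) (c : Vtx) (v : Vtx) : Vtx :=
  fun j => xor (v (σ j)) (c j)

/-- A weak parallelepiped structure `(P, Q)`: every face of an element of `Q` lies in `P`;
`Q` is invariant under the Euclidean permutations of the cube; the relation `≈` on `P`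
(`p ≈ q ↔ joinQuad p q ∈ Q`) is an equivalence relation; and seven points whose three
determined faces lie in `P` can be completed to an element of `Q`. -/
def IsWeakParallelepiped (P : Set (Quad X)) (Q : Set (Cube X)) : Prop :=
  IsWeakParallelogram P ∧
  (∀ x ∈ Q, ∀ (i : Fin 3) (b : Bool), face x i b ∈ P) ∧
  (∀ (σ : Equiv.Perm (Fin 3)) (c : Vtx), ∀ x ∈ Q, (fun v => x (cubeSym σ c v)) ∈ Q) ∧
  (∀ p ∈ P, joinQuad p p ∈ Q) ∧
  (∀ p q : Quad X, joinQuad p q ∈ Q → joinQuad q p ∈ Q) ∧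
  (∀ p q r : Quad X, joinQuad p q ∈ Q → joinQuad q r ∈ Q → joinQuad p r ∈ Q) ∧
  (∀ x000 x001 x010 x011 x100 x101 x110 : X,
    (x000, x001, x010, x011) ∈ P → (x000, x010, x100, x110) ∈ P →
    (x000, x001, x100, x101) ∈ P →
    ∃ x111, joinQuad (x000, x001, x010, x011) (x100, x101, x110, x111) ∈ Q)

/-- A strong parallelepiped structure: the completing eighth point is unique. -/
def IsStrongParallelepiped (P : Set (Quad X)) (Q : Set (Cube X)) : Prop :=
  IsWeakParallelepiped P Q ∧
  ∀ x000 x001 x010 x011 x100 x101 x110 : X,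
    (x000, x001, x010, x011) ∈ P → (x000, x010, x100, x110) ∈ P →
    (x000, x001, x100, x101) ∈ P →
    ∃! x111, joinQuad (x000, x001, x010, x011) (x100, x101, x110, x111) ∈ Q

/-- The setoid on `X²` given by the parallelogram relation `∼`. -/
def baseSetoid (P : Set (Quad X)) (hP : IsWeakParallelogram P) : Setoid (X × X) where
  r p q := (p.1, p.2, q.1, q.2) ∈ P
  iseqv := ⟨fun p => hP.1 p.1 p.2,
            fun h => hP.2.1 _ _ _ _ h,
            fun h h' => hP.2.2.1 _ _ _ _ _ _ h h'⟩

/-- The base `B = X²/∼` of a weak parallelogram structure. -/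
def Base (P : Set (Quad X)) (hP : IsWeakParallelogram P) : Type := Quotient (baseSetoid P hP)

/-- The class `⟨x,y⟩ ∈ B` of a pair `(x,y)`. -/
def cls (P : Set (Quad X)) (hP : IsWeakParallelogram P) (x y : X) : Base P hP :=
  Quotient.mk (baseSetoid P hP) (x, y)

/-- The Gowers-type sum over parallelograms attached to a finitely supported `f : X → ℂ`. -/
noncomputable def gSum2 (P : Set (Quad X)) (f : X →₀ ℂ) : ℂ :=
  ∑ᶠ q ∈ P, f q.1 * (starRingEnd ℂ) (f q.2.1) * (starRingEnd ℂ) (f q.2.2.1) * f q.2.2.2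

/-- The seminorm `‖f‖_P = (gSum2 P f)^{1/4}`. -/
noncomputable def pNorm (P : Set (Quad X)) (f : X →₀ ℂ) : ℝ :=
  (gSum2 P f).re ^ ((1 : ℝ) / 4)

/-- `C^{|ε|} z`: conjugate `z` when the vertex `v` has an odd number of `1` entries. -/
noncomputable def cConjFactor (v : Vtx) (z : ℂ) : ℂ :=
  if xor (v 0) (xor (v 1) (v 2)) then (starRingEnd ℂ) z else z

/-- The Gowers-type sum over parallelepipeds attached to a finitely supported `f : X → ℂ`. -/
noncomputable def gSum3 (Q : Set (Cube X)) (f : X →₀ ℂ) : ℂ :=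
  ∑ᶠ x ∈ Q, ∏ v : Vtx, cConjFactor v (f (x v))

/-- The seminorm `‖f‖_Q = (gSum3 Q f)^{1/8}`. -/
noncomputable def qNorm (Q : Set (Cube X)) (f : X →₀ ℂ) : ℝ :=
  (gSum3 Q f).re ^ ((1 : ℝ) / 8)

/-- The structure group of a parallelepiped structure, as a set of bijections of `X`:
those `g` mapping every parallelogram to an equivalent parallelogram. -/
def structSet (P : Set (Quad X)) (Q : Set (Cube X)) : Set (Equiv.Perm X) :=
  {g | ∀ p ∈ P, map4 g p ∈ P ∧ joinQuad (map4 g p) p ∈ Q}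

/-- `x` and `y` lie in the same fiber of `π : X → B`, `π(x) = ⟨i,x⟩`. -/
def sameFiber (P : Set (Quad X)) (i x y : X) : Prop := (i, x, i, y) ∈ P

/-- A vertical quadruple: all four points lie in one fiber. -/
def VerticalQ (P : Set (Quad X)) (i : X) (w : Quad X) : Prop :=
  sameFiber P i w.1 w.2.1 ∧ sameFiber P i w.2.1 w.2.2.1 ∧ sameFiber P i w.2.2.1 w.2.2.2

/-- `y = u·x` where `u = [w]` is the class of the vertical parallelogram `w`:
`(x,x,x,y)` is a parallelogram equivalent to `w`. -/
def actsRel (P : Set (Quad X)) (Q : Set (Cube X)) (w : Quad X) (x y : X) : Prop :=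
  (x, x, x, y) ∈ P ∧ joinQuad (x, x, x, y) w ∈ Q

section Groups

variable (G : Type) [Group G]

/-- The diagonal embedding `G → G^{[2]}`. -/
def diagHom2 : G →* Quad G where
  toFun g := (g, g, g, g)
  map_one' := rfl
  map_mul' _ _ := rfl

/-- The diagonal embedding `G → G^{[3]}`. -/
def diagHom3 : G →* Cube G where
  toFun g := fun _ => g
  map_one' := rfl
  map_mul' _ _ := rfl

/-- The two dimensional edge group `G^{[2,1]}`. -/
def edgeGroup2 : Subgroup (Quad G) :=
  Subgroup.closure
    {q : Quad G | ∃ g : G, q = (g, g, 1, 1) ∨ q = (g, 1, g, 1) ∨ q = (g, g, g, g)}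

/-- The second commutator subgroup `G₃ = [G, G₂]`. -/
def secondCommutator : Subgroup G := ⁅(⊤ : Subgroup G), commutator G⁆

variable {G}

/-- The edge group `F^{[2,1]}` of a subgroup `F ≤ G`, inside `G^{[2]}`. -/
def edgeGroup2Of (F : Subgroup G) : Subgroup (Quad G) :=
  Subgroup.closure
    {q : Quad G | ∃ u ∈ F, q = (u, u, 1, 1) ∨ q = (u, 1, u, 1) ∨ q = (u, u, u, u)}

/-- `F^{[2]} = F⁴` as a subgroup of `G^{[2]}`. -/
def quadSub (F : Subgroup G) : Subgroup (Quad G) := F.prod (F.prod (F.prod F))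

/-- Faces of the cube `{0,1}³`. -/
def IsFace3 (α : Set Vtx) : Prop := ∃ (i : Fin 3) (b : Bool), α = {v : Vtx | v i = b}

/-- Edges of the cube `{0,1}³`. -/
def IsEdge3 (α : Set Vtx) : Prop :=
  ∃ (i j : Fin 3) (b c : Bool), i ≠ j ∧ α = {v : Vtx | v i = b ∧ v j = c}

open Classical in
/-- The element `g^{[3,α]}` of `G^{[3]}`, with coordinate `g` on `α` and `1` elsewhere. -/
noncomputable def cubeElt (α : Set Vtx) (g : G) : Cube G :=
  fun v => if v ∈ α then g else 1

variable (G)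

/-- The face group `G^{[3,2]}`, generated by the `g^{[3,f]}` for faces `f` of the cube. -/
noncomputable def faceGroup : Subgroup (Cube G) :=
  Subgroup.closure {x : Cube G | ∃ (g : G) (α : Set Vtx), IsFace3 α ∧ x = cubeElt α g}

variable {G}

/-- The edge group `F^{[3,1]}` of a subgroup `F ≤ G`, generated by the `u^{[3,e]}` for
`u ∈ F` and edges `e` of the cube. -/
noncomputable def edgeGroup3 (F : Subgroup G) : Subgroup (Cube G) :=
  Subgroup.closure {x : Cube G | ∃ u ∈ F, ∃ α : Set Vtx, IsEdge3 α ∧ x = cubeElt α u}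

end Groups

/-- The data realizing `(PY, QY)` as the nilparallelepiped structure associated to
`G`, `F`, `Γ` via the coset projection `p : G → Y ≅ G/Γ`. -/
def NilWitness (G : Type) [Group G] (F Γ : Subgroup G) {Y : Type} (p : G → Y)
    (PY : Set (Quad Y)) (QY : Set (Cube Y)) : Prop :=
  commutator G ≤ F ∧ F ≤ Subgroup.center G ∧ Γ ⊓ F = ⊥ ∧
  Function.Surjective p ∧ (∀ g g' : G, p g = p g' ↔ g⁻¹ * g' ∈ Γ) ∧
  PY = map4 p '' ((edgeGroup2 G : Set (Quad G)) * (quadSub F : Set (Quad G))) ∧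
  QY = mapCube p '' ((faceGroup G : Set (Cube G)) * (edgeGroup3 F : Set (Cube G)))

/-- `(PY, QY)` is a nilparallelepiped structure. -/
def IsNilStructure {Y : Type} (PY : Set (Quad Y)) (QY : Set (Cube Y)) : Prop :=
  ∃ (G : Type) (inst : Group G) (F Γ : @Subgroup G inst) (p : G → Y),
    @NilWitness G inst F Γ Y p PY QY

/-- A splitting of the exact sequence `0 → F → P_s → B → 0` for `s = ⟨a₀, b₀⟩`, encoded
by a lift `ψ : X → 𝒫_s` of a homomorphism section `φ : B → P_s` of `q_s`:
`ψ x` is a parallelogram in `𝒫_s` representing the class `φ(π(x))`. -/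
def IsSplittingAt (P : Set (Quad X)) (Q : Set (Cube X)) (i a₀ b₀ : X) : Prop :=
  ∃ ψ : X → Quad X,
    (∀ x, ψ x ∈ P) ∧
    (∀ x, (a₀, b₀, (ψ x).1, (ψ x).2.1) ∈ P) ∧
    (∀ x, ((ψ x).1, (ψ x).2.2.1, i, x) ∈ P) ∧
    (∀ x y, (i, x, i, y) ∈ P → joinQuad (ψ x) (ψ y) ∈ Q) ∧
    (∀ x1 x2 x3, (x1, x3, i, x2) ∈ P →
      ∃ c d, joinQuad ((ψ x1).2.2.1, (ψ x1).2.2.2, c, d) (ψ x2) ∈ Q ∧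
        joinQuad ((ψ x1).1, (ψ x1).2.1, c, d) (ψ x3) ∈ Q)

/-- `(B, c)` is a realization of the base group of the parallelogram structure `P`,
`c x y` realizing the class `⟨x,y⟩`. -/
def IsBaseRealization (P : Set (Quad X)) (B : Type) [AddCommGroup B] (c : X → X → B) : Prop :=
  (Function.Surjective fun p : X × X => c p.1 p.2) ∧
  (∀ a b a' b' : X, c a b = c a' b' ↔ (a, b, a', b') ∈ P) ∧
  (∀ a b d : X, c a b + c b d = c a d)

/-- `(F, fl)` is a realization of the fiber group of the parallelepiped structure `(P, Q)`:
`fl` maps vertical parallelograms onto `F`, separates exactly the `≈`-classes, and is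
additive with respect to the composition of vertical parallelograms. -/
def IsFiberRealization (P : Set (Quad X)) (Q : Set (Cube X)) (i : X) (F : Type)
    [AddCommGroup F] (fl : Quad X → F) : Prop :=
  (∀ u : F, ∃ w, VerticalQ P i w ∧ fl w = u) ∧
  (∀ w w' : Quad X, VerticalQ P i w → VerticalQ P i w' →
    (fl w = fl w' ↔ joinQuad w w' ∈ Q)) ∧
  (∀ x0 x1 x2 x3 x4 x5 : X, sameFiber P i x0 x1 → sameFiber P i x1 x2 →
    sameFiber P i x2 x3 → sameFiber P i x3 x4 → sameFiber P i x4 x5 →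
    fl (x0, x1, x2, x3) + fl (x2, x3, x4, x5) = fl (x0, x1, x4, x5))

/-- A divisible (equivalently, injective) abelian group. -/
def IsDivisibleGroup (F : Type) [AddCommGroup F] : Prop :=
  ∀ (u : F) (n : ℕ), 0 < n → ∃ v : F, n • v = u

/-- A projective abelian group (projective as a `ℤ`-module). -/
def IsProjectiveAdd (B : Type) [AddCommGroup B] : Prop := Module.Projective ℤ B

/-!
A quadruple `(a, b, c, d)` lies in `G^{[2,1]}` exactly when its defect `b⁻¹ a c⁻¹ d` lies in
`G₂`: the defect is multiplicative modulo `G₂` and kills the generators, and conversely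
`(1, 1, 1, t) = ⁅(1, g, 1, g), (1, 1, k, k)⁆` for `t = ⁅g, k⁆`. The parallelogram axioms follow.

Commutators of face elements give `t^{[3,e]} ∈ G^{[3,2]}` for every edge `e` and `t ∈ G₂`, and
`t^{[3,{111}]} ∈ G^{[3,2]}` for `t ∈ G₃`. The first lets seven compatible vertices be completed
by an explicit product of face and edge elements; the second shows that the completion is
ambiguous unless `G₃ = 1`. Conversely, if `G₂` is central, right multiplication by a face
generator changes the defects of the two faces `ε₁ = 0` and `ε₁ = 1` of an element of
`G^{[3,2]}` in the same way, so these defects agree, and that determines the eighth vertex.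
-/

open scoped commutatorElement

section

variable {G : Type} [Group G]

def paraDefect (p : Quad G) : G := p.2.1⁻¹ * p.1 * p.2.2.1⁻¹ * p.2.2.2

variable (G) in
def abParaDefect : Quad G →* Abelianization G :=
  let π₁ : Quad G →* G := MonoidHom.fst _ _
  let π₂ : Quad G →* G := (MonoidHom.fst _ _).comp (MonoidHom.snd _ _)
  let π₃ : Quad G →* G := (MonoidHom.fst _ _).comp ((MonoidHom.snd _ _).comp (MonoidHom.snd _ _))
  let π₄ : Quad G →* G := (MonoidHom.snd _ _).comp ((MonoidHom.snd _ _).comp (MonoidHom.snd _ _))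
  Abelianization.of.comp π₁ / Abelianization.of.comp π₂ / Abelianization.of.comp π₃ *
    Abelianization.of.comp π₄

lemma abParaDefect_apply (p : Quad G) :
    abParaDefect G p = Abelianization.of (paraDefect p) := by
  simp [abParaDefect, paraDefect, div_eq_mul_inv, mul_comm]

lemma row_mem_edgeGroup2 (g : G) : ((g, g, 1, 1) : Quad G) ∈ edgeGroup2 G :=
  Subgroup.subset_closure ⟨g, .inl rfl⟩

lemma col_mem_edgeGroup2 (g : G) : ((g, 1, g, 1) : Quad G) ∈ edgeGroup2 G :=
  Subgroup.subset_closure ⟨g, .inr (.inl rfl)⟩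

lemma const_mem_edgeGroup2 (g : G) : ((g, g, g, g) : Quad G) ∈ edgeGroup2 G :=
  Subgroup.subset_closure ⟨g, .inr (.inr rfl)⟩

lemma row'_mem_edgeGroup2 (g : G) : ((1, 1, g, g) : Quad G) ∈ edgeGroup2 G := by
  simpa using mul_mem (const_mem_edgeGroup2 g) (row_mem_edgeGroup2 g⁻¹)

lemma col'_mem_edgeGroup2 (g : G) : ((1, g, 1, g) : Quad G) ∈ edgeGroup2 G := by
  simpa using mul_mem (const_mem_edgeGroup2 g) (col_mem_edgeGroup2 g⁻¹)

lemma corner_mem_edgeGroup2 {t : G} (ht : t ∈ commutator G) :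
    ((1, 1, 1, t) : Quad G) ∈ edgeGroup2 G := by
  let corner : G →* Quad G :=
    (MonoidHom.inr G _).comp ((MonoidHom.inr G _).comp (MonoidHom.inr G G))
  suffices commutator G ≤ (edgeGroup2 G).comap corner from this ht
  rw [commutator_def, Subgroup.commutator_le]
  intro g _ k _
  have h : corner ⁅g, k⁆ = ⁅((1, g, 1, g) : Quad G), (1, 1, k, k)⁆ := by
    simp [corner, commutatorElement_def]
  have hg := col'_mem_edgeGroup2 g
  have hk := row'_mem_edgeGroup2 k
  rw [Subgroup.mem_comap, h, commutatorElement_def]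
  exact mul_mem (mul_mem (mul_mem hg hk) (inv_mem hg)) (inv_mem hk)

lemma edgeGroup2_eq_ker : edgeGroup2 G = (abParaDefect G).ker := by
  apply le_antisymm
  · rw [edgeGroup2, Subgroup.closure_le]
    rintro _ ⟨g, rfl | rfl | rfl⟩ <;> simp [MonoidHom.mem_ker, abParaDefect]
  · rintro ⟨a, b, c, d⟩ hp
    have ht : c⁻¹ * a * b⁻¹ * d ∈ commutator G := by
      rw [← Abelianization.ker_of, MonoidHom.mem_ker, ← MonoidHom.mem_ker.mp hp,
        abParaDefect_apply, paraDefect]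
      simp only [map_mul, map_inv]
      grind
    have h : ((a, b, c, d) : Quad G) = (a, a, a, a) * (1, a⁻¹ * b, 1, a⁻¹ * b) *
        (1, 1, a⁻¹ * c, a⁻¹ * c) * (1, 1, 1, c⁻¹ * a * b⁻¹ * d) := by
      simp only [Prod.mk_mul_mk, Prod.mk.injEq]
      refine ⟨?_, ?_, ?_, ?_⟩ <;> group
    rw [h]
    exact mul_mem (mul_mem (mul_mem (const_mem_edgeGroup2 a) (col'_mem_edgeGroup2 _))
      (row'_mem_edgeGroup2 _)) (corner_mem_edgeGroup2 ht)

lemma mem_edgeGroup2_iff {p : Quad G} : p ∈ edgeGroup2 G ↔ paraDefect p ∈ commutator G := by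
  rw [edgeGroup2_eq_ker, MonoidHom.mem_ker, abParaDefect_apply, ← MonoidHom.mem_ker,
    Abelianization.ker_of]

lemma isWeakParallelogram_edgeGroup2 : IsWeakParallelogram (edgeGroup2 G : Set (Quad G)) := by
  simp only [IsWeakParallelogram, SetLike.mem_coe, mem_edgeGroup2_iff, paraDefect]
  refine ⟨fun a b => ?_, fun a b c d h => ?_, fun a b c d e f h h' => ?_,
    fun a b c d h => ?_, fun a b c => ⟨c * a⁻¹ * b, ?_⟩⟩
  · convert (commutator G).one_mem using 1; group
  · convert inv_mem h using 1; group
  · convert mul_mem h h' using 1; group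
  · rw [← Abelianization.ker_of, MonoidHom.mem_ker] at h ⊢
    simp only [map_mul, map_inv] at h ⊢
    rw [← h]; grind
  · convert (commutator G).one_mem using 1; group

noncomputable def cubeEltHom (α : Set Vtx) : G →* Cube G where
  toFun := cubeElt α
  map_one' := by funext v; simp [cubeElt]
  map_mul' g h := by funext v; by_cases hv : v ∈ α <;> simp [cubeElt, hv]

lemma cubeElt_inv (α : Set Vtx) (g : G) : (cubeElt α g)⁻¹ = cubeElt α g⁻¹ :=
  (map_inv (cubeEltHom α) g).symm

lemma cubeElt_commutatorElement (α β : Set Vtx) (g h : G) :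
    cubeElt (α ∩ β) ⁅g, h⁆ = ⁅cubeElt α g, cubeElt β h⁆ := by
  funext v
  by_cases hα : v ∈ α <;> by_cases hβ : v ∈ β <;>
    simp [cubeElt, commutatorElement_def, hα, hβ]

lemma cubeElt_mem_faceGroup (i : Fin 3) (b : Bool) (g : G) :
    cubeElt {v : Vtx | v i = b} g ∈ faceGroup G :=
  Subgroup.subset_closure ⟨g, _, ⟨i, b, rfl⟩, rfl⟩

lemma const_mem_faceGroup (g : G) : (fun _ => g : Cube G) ∈ faceGroup G := by
  have h : (fun _ => g : Cube G) =
      cubeElt {v : Vtx | v 0 = false} g * cubeElt {v : Vtx | v 0 = true} g := by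
    funext v; cases hv : v 0 <;> simp [cubeElt, hv]
  rw [h]
  exact mul_mem (cubeElt_mem_faceGroup 0 false g) (cubeElt_mem_faceGroup 0 true g)

lemma cubeElt_inter_mem_faceGroup {α β : Set Vtx} {H : Subgroup G}
    (hα : ∀ g, cubeElt α g ∈ faceGroup G) (hβ : ∀ h ∈ H, cubeElt β h ∈ faceGroup G)
    {t : G} (ht : t ∈ ⁅(⊤ : Subgroup G), H⁆) : cubeElt (α ∩ β) t ∈ faceGroup G := by
  suffices ⁅(⊤ : Subgroup G), H⁆ ≤ (faceGroup G).comap (cubeEltHom (α ∩ β)) from this ht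
  rw [Subgroup.commutator_le]
  intro g _ h hh
  have hg := hα g
  have hh' := hβ h hh
  change cubeElt (α ∩ β) ⁅g, h⁆ ∈ faceGroup G
  rw [cubeElt_commutatorElement, commutatorElement_def]
  exact mul_mem (mul_mem (mul_mem hg hh') (inv_mem hg)) (inv_mem hh')

lemma cubeElt_edge_mem_faceGroup (i j : Fin 3) (b c : Bool) {t : G} (ht : t ∈ commutator G) :
    cubeElt ({v : Vtx | v i = b} ∩ {v : Vtx | v j = c}) t ∈ faceGroup G := by
  rw [commutator_def] at ht
  exact cubeElt_inter_mem_faceGroup (cubeElt_mem_faceGroup i b)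
    (fun h _ => cubeElt_mem_faceGroup j c h) ht

lemma cubeElt_vertex_mem_faceGroup {t : G} (ht : t ∈ secondCommutator G) :
    cubeElt ({v : Vtx | v 0 = true} ∩ ({v : Vtx | v 1 = true} ∩ {v : Vtx | v 2 = true})) t ∈
      faceGroup G :=
  cubeElt_inter_mem_faceGroup (cubeElt_mem_faceGroup 0 true)
    (fun _ h => cubeElt_edge_mem_faceGroup 1 2 true true h) ht

lemma face_mul (x y : Cube G) (i : Fin 3) (b : Bool) :
    face (x * y) i b = face x i b * face y i b := rfl

def faceHom (i : Fin 3) (b : Bool) : Cube G →* Quad G where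
  toFun x := face x i b
  map_one' := rfl
  map_mul' x y := face_mul x y i b

lemma face_mem_edgeGroup2 {x : Cube G} (hx : x ∈ faceGroup G) (i : Fin 3) (b : Bool) :
    face x i b ∈ edgeGroup2 G := by
  suffices faceGroup G ≤ (edgeGroup2 G).comap (faceHom i b) from this hx
  rw [faceGroup, Subgroup.closure_le]
  rintro _ ⟨g, _, ⟨j, c, rfl⟩, rfl⟩
  change face (cubeElt _ g) i b ∈ edgeGroup2 G
  fin_cases i <;> fin_cases j <;> cases b <;> cases c <;>
    simp [face, insert3, cubeElt, row_mem_edgeGroup2, col_mem_edgeGroup2, const_mem_edgeGroup2,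
      row'_mem_edgeGroup2, col'_mem_edgeGroup2]

lemma comp_mem_faceGroup (e : Vtx → Vtx)
    (he : ∀ (j : Fin 3) (c : Bool), ∃ (j' : Fin 3) (c' : Bool), ∀ v, e v j = c ↔ v j' = c')
    {x : Cube G} (hx : x ∈ faceGroup G) : x ∘ e ∈ faceGroup G := by
  suffices faceGroup G ≤ (faceGroup G).comap
      (MonoidHom.pi fun v => Pi.evalMonoidHom (fun _ => G) (e v)) from this hx
  rw [faceGroup, Subgroup.closure_le]
  rintro _ ⟨g, _, ⟨j, c, rfl⟩, rfl⟩
  obtain ⟨j', c', hj⟩ := he j c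
  have h : cubeElt {w : Vtx | w j = c} g ∘ e = cubeElt {w : Vtx | w j' = c'} g := by
    funext v; simp [cubeElt, hj v]
  change cubeElt {w : Vtx | w j = c} g ∘ e ∈ faceGroup G
  rw [h]
  exact cubeElt_mem_faceGroup j' c' g

lemma cubeSym_mem_faceGroup (σ : Equiv.Perm (Fin 3)) (c : Vtx) {x : Cube G}
    (hx : x ∈ faceGroup G) : (fun v => x (cubeSym σ c v)) ∈ faceGroup G :=
  comp_mem_faceGroup _ (fun j b => ⟨σ j, xor b (c j), fun v => by
    simp only [cubeSym]; cases v (σ j) <;> cases c j <;> cases b <;> decide⟩) hx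

def joinQuadHom : Quad G × Quad G →* Cube G where
  toFun pq := joinQuad pq.1 pq.2
  map_one' := by
    funext v; cases h0 : v 0 <;> cases h1 : v 1 <;> cases h2 : v 2 <;>
      simp [joinQuad, quadAt, h0, h1, h2]
  map_mul' _ _ := by
    funext v; cases h0 : v 0 <;> cases h1 : v 1 <;> cases h2 : v 2 <;>
      simp [joinQuad, quadAt, h0, h1, h2]

lemma joinQuad_self_mem_faceGroup {p : Quad G} (hp : p ∈ edgeGroup2 G) :
    joinQuad p p ∈ faceGroup G := by
  suffices edgeGroup2 G ≤ (faceGroup G).comap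
      (joinQuadHom.comp ((MonoidHom.id _).prod (MonoidHom.id _))) from this hp
  rw [edgeGroup2, Subgroup.closure_le]
  rintro _ ⟨g, rfl | rfl | rfl⟩ <;> rw [SetLike.mem_coe, Subgroup.mem_comap]
  · convert cubeElt_mem_faceGroup 1 false g using 1
    funext v; cases h0 : v 0 <;> cases h1 : v 1 <;> cases h2 : v 2 <;>
      simp [joinQuadHom, joinQuad, quadAt, cubeElt, h0, h1, h2]
  · convert cubeElt_mem_faceGroup 2 false g using 1
    funext v; cases h0 : v 0 <;> cases h1 : v 1 <;> cases h2 : v 2 <;>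
      simp [joinQuadHom, joinQuad, quadAt, cubeElt, h0, h1, h2]
  · convert const_mem_faceGroup g using 1
    funext v; cases h0 : v 0 <;> cases h1 : v 1 <;> cases h2 : v 2 <;>
      simp [joinQuadHom, joinQuad, quadAt, h0, h1, h2]

lemma joinQuad_swap_mem_faceGroup {p q : Quad G} (h : joinQuad p q ∈ faceGroup G) :
    joinQuad q p ∈ faceGroup G := by
  convert cubeSym_mem_faceGroup 1 ![true, false, false] h using 1
  funext v
  cases h0 : v 0 <;> simp [joinQuad, cubeSym, h0]

lemma joinQuad_trans_mem_faceGroup {p q r : Quad G} (h₁ : joinQuad p q ∈ faceGroup G)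
    (h₂ : joinQuad q r ∈ faceGroup G) : joinQuad p r ∈ faceGroup G := by
  have hq : q ∈ edgeGroup2 G := by
    obtain ⟨a, b, c, d⟩ := q
    exact face_mem_edgeGroup2 h₁ 0 true
  have h : joinQuad p r = joinQuad p q * (joinQuad q q)⁻¹ * joinQuad q r := by
    funext v; by_cases h0 : v 0 = false <;> simp [joinQuad, h0]
  rw [h]
  exact mul_mem (mul_mem h₁ (inv_mem (joinQuad_self_mem_faceGroup hq))) h₂

def cubeCompletion (x000 x001 x010 x011 x100 x101 x110 : G) : G :=
  x100 * x000⁻¹ * x010 * x000⁻¹ * x001 * paraDefect (x000, x001, x010, x011) *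
    paraDefect (x000, x010, x100, x110) * paraDefect (x000, x001, x100, x101)

lemma joinQuad_cubeCompletion_mem_faceGroup {x000 x001 x010 x011 x100 x101 x110 : G}
    (h₁ : (x000, x001, x010, x011) ∈ edgeGroup2 G)
    (h₂ : (x000, x010, x100, x110) ∈ edgeGroup2 G)
    (h₃ : (x000, x001, x100, x101) ∈ edgeGroup2 G) :
    joinQuad (x000, x001, x010, x011)
      (x100, x101, x110, cubeCompletion x000 x001 x010 x011 x100 x101 x110) ∈ faceGroup G := by
  rw [mem_edgeGroup2_iff] at h₁ h₂ h₃
  have h := mul_mem (mul_mem (mul_mem (mul_mem (mul_mem (mul_mem (const_mem_faceGroup x000)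
    (cubeElt_mem_faceGroup 0 true (x000⁻¹ * x100))) (cubeElt_mem_faceGroup 1 true (x000⁻¹ * x010)))
    (cubeElt_mem_faceGroup 2 true (x000⁻¹ * x001))) (cubeElt_edge_mem_faceGroup 1 2 true true h₁))
    (cubeElt_edge_mem_faceGroup 0 1 true true h₂)) (cubeElt_edge_mem_faceGroup 0 2 true true h₃)
  convert h using 1
  funext v
  cases h0 : v 0 <;> cases h1 : v 1 <;> cases h2 : v 2 <;>
    simp [joinQuad, quadAt, cubeElt, cubeCompletion, paraDefect, h0, h1, h2] <;> group

lemma isWeakParallelepiped_edgeGroup2_faceGroup :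
    IsWeakParallelepiped (edgeGroup2 G : Set (Quad G)) (faceGroup G : Set (Cube G)) :=
  ⟨isWeakParallelogram_edgeGroup2, fun _ hx => face_mem_edgeGroup2 hx,
    fun σ c _ hx => cubeSym_mem_faceGroup σ c hx, fun _ hp => joinQuad_self_mem_faceGroup hp,
    fun _ _ h => joinQuad_swap_mem_faceGroup h,
    fun _ _ _ h₁ h₂ => joinQuad_trans_mem_faceGroup h₁ h₂,
    fun _ _ _ _ _ _ _ h₁ h₂ h₃ => ⟨_, joinQuad_cubeCompletion_mem_faceGroup h₁ h₂ h₃⟩⟩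

lemma secondCommutator_eq_bot_of_isStrongParallelepiped
    (h : IsStrongParallelepiped (edgeGroup2 G : Set (Quad G)) (faceGroup G : Set (Cube G))) :
    secondCommutator G = ⊥ := by
  rw [Subgroup.eq_bot_iff_forall]
  intro t ht
  have hone : ((1, 1, 1, 1) : Quad G) ∈ edgeGroup2 G := one_mem _
  obtain ⟨_, _, huniq⟩ := h.2 1 1 1 1 1 1 1 hone hone hone
  have hvertex : joinQuad ((1, 1, 1, 1) : Quad G) (1, 1, 1, t) ∈ faceGroup G := by
    convert cubeElt_vertex_mem_faceGroup ht using 1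
    funext v
    cases h0 : v 0 <;> cases h1 : v 1 <;> cases h2 : v 2 <;>
      simp [joinQuad, quadAt, cubeElt, h0, h1, h2]
  have htrivial : joinQuad ((1, 1, 1, 1) : Quad G) (1, 1, 1, 1) ∈ faceGroup G := by
    convert (faceGroup G).one_mem using 1
    exact map_one joinQuadHom
  exact (huniq t hvertex).trans (huniq 1 htrivial).symm

lemma secondCommutator_eq_bot_iff :
    secondCommutator G = ⊥ ↔ commutator G ≤ Subgroup.center G := by
  rw [secondCommutator, Subgroup.commutator_eq_bot_iff_le_centralizer,
    Subgroup.le_centralizer_iff, Subgroup.coe_top, Subgroup.centralizer_univ]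

lemma commutatorElement_mul_right_of_mem_center {z : G} (hz : z ∈ Subgroup.center G)
    (g u : G) : ⁅g, z * u⁆ = ⁅g, u⁆ := by
  have hz' := Subgroup.mem_center_iff.mp hz
  rw [commutatorElement_mul_right_eq_mul_conj,
    commutatorElement_eq_one_iff_mul_comm.mpr (hz' g), one_mul, ← hz', mul_inv_cancel_right]

lemma inv_mul_mul_self_of_mem_center {z : G} (hz : z ∈ Subgroup.center G) (g : G) :
    g⁻¹ * z * g = z := by
  rw [mul_assoc, ← Subgroup.mem_center_iff.mp hz g, inv_mul_cancel_left]

lemma paraDefect_mul_const {p : Quad G} (hp : paraDefect p ∈ Subgroup.center G) (g : G) :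
    paraDefect (p * (g, g, g, g)) = paraDefect p := by
  rw [← inv_mul_mul_self_of_mem_center hp g]
  simp [paraDefect]; group

lemma paraDefect_mul_col (p : Quad G) (g : G) :
    paraDefect (p * (g, 1, g, 1)) = paraDefect p := by
  simp [paraDefect]; group

lemma paraDefect_mul_col' {p : Quad G} (hp : paraDefect p ∈ Subgroup.center G) (g : G) :
    paraDefect (p * (1, g, 1, g)) = paraDefect p := by
  rw [← inv_mul_mul_self_of_mem_center hp g]
  simp [paraDefect]; group

lemma paraDefect_mul_row (p : Quad G) (g : G) :
    paraDefect (p * (g, g, 1, 1)) = ⁅g⁻¹, p.2.1⁻¹ * p.1⁆ * paraDefect p := by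
  simp [paraDefect, commutatorElement_def]; group

lemma paraDefect_mul_row' {p : Quad G} (hp : paraDefect p ∈ Subgroup.center G) (g : G) :
    paraDefect (p * (1, 1, g, g)) = ⁅g⁻¹, p.2.1⁻¹ * p.1⁆⁻¹ * paraDefect p := by
  rw [← inv_mul_mul_self_of_mem_center hp g]
  simp [paraDefect, commutatorElement_def]; group

lemma paraDefect_face_mul_cubeElt (hG : commutator G ≤ Subgroup.center G) {x : Cube G}
    (hx : x ∈ faceGroup G) (h : paraDefect (face x 0 false) = paraDefect (face x 0 true))
    (i : Fin 3) (β : Bool) (g : G) :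
    paraDefect (face (x * cubeElt {v | v i = β} g) 0 false) =
      paraDefect (face (x * cubeElt {v | v i = β} g) 0 true) := by
  have central : ∀ j b, paraDefect (face x j b) ∈ Subgroup.center G := fun j b =>
    hG (mem_edgeGroup2_iff.mp (face_mem_edgeGroup2 hx j b))
  have hz₁ := central 0 true
  -- The side face `ε₂ = 0` lies in `G^{[2,1]}`, so the factors `b⁻¹ a` read off the two faces
  -- differ by a central element and produce the same commutators.
  have hu : (face x 0 true).2.1⁻¹ * (face x 0 true).1 =
      (paraDefect (face x 1 false))⁻¹ * ((face x 0 false).2.1⁻¹ * (face x 0 false).1) := by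
    simp [face, insert3, paraDefect]; group
  have hcomm : ∀ g, ⁅g, (face x 0 true).2.1⁻¹ * (face x 0 true).1⁆ =
      ⁅g, (face x 0 false).2.1⁻¹ * (face x 0 false).1⁆ := fun g => by
    rw [hu, commutatorElement_mul_right_of_mem_center (inv_mem (central 1 false))]
  rw [face_mul, face_mul]
  generalize face x 0 false = p₀, face x 0 true = p₁ at *
  fin_cases i <;> cases β <;>
    simp [face, insert3, cubeElt, paraDefect_mul_const, paraDefect_mul_col, paraDefect_mul_col',
      paraDefect_mul_row, paraDefect_mul_row', hz₁, hcomm, h]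

lemma paraDefect_face_zero_eq (hG : commutator G ≤ Subgroup.center G) {x : Cube G}
    (hx : x ∈ faceGroup G) : paraDefect (face x 0 false) = paraDefect (face x 0 true) := by
  induction hx using Subgroup.closure_induction_right with
  | one => rfl
  | mul_right x hx _ hy ih =>
    obtain ⟨g, _, ⟨i, β, rfl⟩, rfl⟩ := hy
    exact paraDefect_face_mul_cubeElt hG hx ih i β g
  | mul_inv_cancel x hx _ hy ih =>
    obtain ⟨g, _, ⟨i, β, rfl⟩, rfl⟩ := hy
    rw [cubeElt_inv]
    exact paraDefect_face_mul_cubeElt hG hx ih i β g⁻¹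

lemma eq_of_joinQuad_mem_faceGroup (hG : commutator G ≤ Subgroup.center G)
    {x000 x001 x010 x011 x100 x101 x110 y z : G}
    (hy : joinQuad (x000, x001, x010, x011) (x100, x101, x110, y) ∈ faceGroup G)
    (hz : joinQuad (x000, x001, x010, x011) (x100, x101, x110, z) ∈ faceGroup G) : y = z := by
  have h₁ := paraDefect_face_zero_eq hG hy
  have h₂ := paraDefect_face_zero_eq hG hz
  simp [face, insert3, joinQuad, quadAt, paraDefect] at h₁ h₂
  rw [h₁] at h₂
  exact mul_left_cancel h₂

lemma isStrongParallelepiped_of_commutator_le_center (hG : commutator G ≤ Subgroup.center G) :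
    IsStrongParallelepiped (edgeGroup2 G : Set (Quad G)) (faceGroup G : Set (Cube G)) :=
  ⟨isWeakParallelepiped_edgeGroup2_faceGroup, fun _ _ _ _ _ _ _ h₁ h₂ h₃ =>
    ⟨_, joinQuad_cubeCompletion_mem_faceGroup h₁ h₂ h₃, fun _ hy =>
      eq_of_joinQuad_mem_faceGroup hG hy (joinQuad_cubeCompletion_mem_faceGroup h₁ h₂ h₃)⟩⟩

end

/-- For any group `G`, `(G^{[2,1]}, G^{[3,2]})` is a weak parallelepiped
structure on `G`, and it is strong if and only if `G` is `2`-step nilpotent, i.e.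
`G₃ = [G, [G,G]] = {1}`. -/
theorem group_parallelepiped (G : Type) [Group G] :
    IsWeakParallelepiped (edgeGroup2 G : Set (Quad G)) (faceGroup G : Set (Cube G)) ∧
    (IsStrongParallelepiped (edgeGroup2 G : Set (Quad G)) (faceGroup G : Set (Cube G)) ↔
      secondCommutator G = ⊥) :=
  ⟨isWeakParallelepiped_edgeGroup2_faceGroup, secondCommutator_eq_bot_of_isStrongParallelepiped,
    fun h => isStrongParallelepiped_of_commutator_le_center (secondCommutator_eq_bot_iff.mp h)⟩

end HK
end

section
/- Let (𝒫,𝒬) be a strong parallelepiped structure on a nonempty set X. Then the structure group 𝒢 of (𝒫,𝒬) is 2-step nilpotent; that is, its second commutator subgroup [𝒢,[𝒢,𝒢]] is trivial. -/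
open scoped Pointwise

namespace HK

variable {X Y : Type}

/-! Structure maps form a group because `≈` is an equivalence relation. For structure maps
`g, f`, comparing the images under `g` and `f` of the parallelograms `(u, f u, v, f v)` and
`(g u, u, g v, v)`, read along the different faces of the cube, shows that the vertical
parallelograms `(x, x, x, ⁅g, f⁆ x)` are all `≈`-equivalent: `⁅g, f⁆` is a translation by one
element of the fibre group. A structure map `k` carries `(x, x, x, ⁅g, f⁆ x)` to an equivalent
parallelogram with first vertex `k x`, so uniqueness of the eighth vertex of a parallelepiped
forces `k (⁅g, f⁆ x) = ⁅g, f⁆ (k x)`. -/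

open scoped commutatorElement

section StructureGroup

variable {X : Type} {P : Set (Quad X)} {Q : Set (Cube X)}

namespace IsWeakParallelogram

theorem refl (hP : IsWeakParallelogram P) (a b : X) : (a, b, a, b) ∈ P := hP.1 a b

theorem symm (hP : IsWeakParallelogram P) {a b c d : X} (h : (a, b, c, d) ∈ P) :
    (c, d, a, b) ∈ P :=
  hP.2.1 _ _ _ _ h

theorem trans (hP : IsWeakParallelogram P) {a b c d e f : X} (h₁ : (a, b, c, d) ∈ P)
    (h₂ : (c, d, e, f) ∈ P) : (a, b, e, f) ∈ P :=
  hP.2.2.1 _ _ _ _ _ _ h₁ h₂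

theorem transpose (hP : IsWeakParallelogram P) {a b c d : X} (h : (a, b, c, d) ∈ P) :
    (a, c, b, d) ∈ P :=
  hP.2.2.2.1 _ _ _ _ h

theorem swap (hP : IsWeakParallelogram P) {a b c d : X} (h : (a, b, c, d) ∈ P) :
    (b, a, d, c) ∈ P :=
  hP.transpose (hP.symm (hP.transpose h))

end IsWeakParallelogram

namespace IsWeakParallelepiped

theorem joinQuad_self (hQ : IsWeakParallelepiped P Q) {p : Quad X} (hp : p ∈ P) :
    joinQuad p p ∈ Q :=
  hQ.2.2.2.1 p hp

theorem joinQuad_symm (hQ : IsWeakParallelepiped P Q) {p q : Quad X} (h : joinQuad p q ∈ Q) :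
    joinQuad q p ∈ Q :=
  hQ.2.2.2.2.1 p q h

theorem joinQuad_trans (hQ : IsWeakParallelepiped P Q) {p q r : Quad X}
    (h₁ : joinQuad p q ∈ Q) (h₂ : joinQuad q r ∈ Q) : joinQuad p r ∈ Q :=
  hQ.2.2.2.2.2.1 p q r h₁ h₂

theorem mem_of_joinQuad_mem (hQ : IsWeakParallelepiped P Q) {p q : Quad X}
    (h : joinQuad p q ∈ Q) : p ∈ P :=
  hQ.2.1 _ h 0 false

theorem mem_of_comp_perm (hQ : IsWeakParallelepiped P Q) (σ : Equiv.Perm (Fin 3))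
    {x y : Cube X} (hx : x ∈ Q) (hy : ∀ v, y v = x (v ∘ σ)) : y ∈ Q := by
  have hyx : y = fun v => x (cubeSym σ (fun _ => false) v) := by
    funext v
    rw [hy]
    congr 1
    funext j
    simp [cubeSym]
  exact hyx ▸ hQ.2.2.1 σ _ x hx

theorem joinQuad_swap01 (hQ : IsWeakParallelepiped P Q) {a b c d e f g h : X}
    (hx : joinQuad (a, b, c, d) (e, f, g, h) ∈ Q) : joinQuad (a, b, e, f) (c, d, g, h) ∈ Q :=
  hQ.mem_of_comp_perm (Equiv.swap 0 1) hx fun v => by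
    cases h0 : v 0 <;> cases h1 : v 1 <;> cases h2 : v 2 <;>
      simp [joinQuad, quadAt, Equiv.swap_apply_of_ne_of_ne, h0, h1, h2]

theorem joinQuad_swap02 (hQ : IsWeakParallelepiped P Q) {a b c d e f g h : X}
    (hx : joinQuad (a, b, c, d) (e, f, g, h) ∈ Q) : joinQuad (a, e, c, g) (b, f, d, h) ∈ Q :=
  hQ.mem_of_comp_perm (Equiv.swap 0 2) hx fun v => by
    cases h0 : v 0 <;> cases h1 : v 1 <;> cases h2 : v 2 <;>
      simp [joinQuad, quadAt, Equiv.swap_apply_of_ne_of_ne, h0, h1, h2]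

theorem joinQuad_swap12 (hQ : IsWeakParallelepiped P Q) {a b c d e f g h : X}
    (hx : joinQuad (a, b, c, d) (e, f, g, h) ∈ Q) : joinQuad (a, c, b, d) (e, g, f, h) ∈ Q :=
  hQ.mem_of_comp_perm (Equiv.swap 1 2) hx fun v => by
    cases h0 : v 0 <;> cases h1 : v 1 <;> cases h2 : v 2 <;>
      simp [joinQuad, quadAt, Equiv.swap_apply_of_ne_of_ne, h0, h1, h2]

end IsWeakParallelepiped

theorem IsStrongParallelepiped.eq_of_joinQuad_mem (h : IsStrongParallelepiped P Q)
    {a b c d d' : X} (hp : (a, b, c, d) ∈ P) (hpq : joinQuad (a, b, c, d) (a, b, c, d') ∈ Q) :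
    d = d' :=
  (h.2 a b c d a b c hp (h.1.1.refl a c) (h.1.1.refl a b)).unique (h.1.joinQuad_self hp) hpq

theorem structSet_pair_mem (hQ : IsWeakParallelepiped P Q) {g : Equiv.Perm X}
    (hg : g ∈ structSet P Q) (a b : X) : (g a, g b, a, b) ∈ P :=
  hQ.mem_of_joinQuad_mem (hQ.joinQuad_swap01 (hg _ (hQ.1.refl a b)).2)

theorem one_mem_structSet (hQ : IsWeakParallelepiped P Q) : 1 ∈ structSet P Q :=
  fun _ hp => ⟨hp, hQ.joinQuad_self hp⟩

theorem mul_mem_structSet (hQ : IsWeakParallelepiped P Q) {g k : Equiv.Perm X}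
    (hg : g ∈ structSet P Q) (hk : k ∈ structSet P Q) : g * k ∈ structSet P Q := fun p hp =>
  ⟨(hg _ (hk p hp).1).1, hQ.joinQuad_trans (hg _ (hk p hp).1).2 (hk p hp).2⟩

theorem inv_mem_structSet (hQ : IsWeakParallelepiped P Q) {g : Equiv.Perm X}
    (hg : g ∈ structSet P Q) : g⁻¹ ∈ structSet P Q := by
  rintro ⟨a, b, c, d⟩ hp
  have hpair (x y : X) : (x, y, g⁻¹ x, g⁻¹ y) ∈ P := by
    simpa using structSet_pair_mem hQ hg (g⁻¹ x) (g⁻¹ y)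
  have hq : (g⁻¹ a, g⁻¹ b, g⁻¹ c, g⁻¹ d) ∈ P :=
    hQ.1.trans (hQ.1.trans (hQ.1.symm (hpair a b)) hp) (hpair c d)
  refine ⟨hq, hQ.joinQuad_symm ?_⟩
  simpa [map4] using (hg _ hq).2

def structGroup (hQ : IsWeakParallelepiped P Q) : Subgroup (Equiv.Perm X) where
  carrier := structSet P Q
  one_mem' := one_mem_structSet hQ
  mul_mem' := mul_mem_structSet hQ
  inv_mem' := inv_mem_structSet hQ

/-- `c` is the translation by a single element of the fibre group. -/
def IsFiberTranslation (Q : Set (Cube X)) (c : X → X) : Prop :=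
  ∀ x y, joinQuad (x, x, x, c x) (y, y, y, c y) ∈ Q

theorem joinQuad_commutator_mem (hQ : IsWeakParallelepiped P Q) {g f : Equiv.Perm X}
    (hg : g ∈ structSet P Q) (hf : f ∈ structSet P Q) (u v : X) :
    joinQuad (f (g u), f (g u), f (g u), g (f u)) (f (g v), f (g v), f (g v), g (f v)) ∈ Q := by
  have hg_image : joinQuad (g u, g (f u), g v, g (f v)) (u, f u, v, f v) ∈ Q :=
    (hg _ (hQ.1.swap (hQ.1.transpose (structSet_pair_mem hQ hf u v)))).2
  have hf_image : joinQuad (f (g u), f u, f (g v), f v) (g u, u, g v, v) ∈ Q :=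
    (hf _ (hQ.1.transpose (structSet_pair_mem hQ hg u v))).2
  have hfg_gf : joinQuad (f (g u), f (g v), g (f u), g (f v)) (f u, f v, f u, f v) ∈ Q :=
    hQ.joinQuad_swap01 <| hQ.joinQuad_swap12 <|
      hQ.joinQuad_trans hf_image (hQ.joinQuad_swap02 hg_image)
  have hfg_diag : joinQuad (f (g u), f (g v), f (g u), f (g v)) (f u, f v, f u, f v) ∈ Q :=
    hQ.joinQuad_trans (mul_mem_structSet hQ hf hg _ (hQ.1.refl u v)).2
      (hQ.joinQuad_symm (hf _ (hQ.1.refl u v)).2)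
  exact hQ.joinQuad_swap02 (hQ.joinQuad_trans hfg_diag (hQ.joinQuad_symm hfg_gf))

theorem isFiberTranslation_commutator (hQ : IsWeakParallelepiped P Q) {g f : Equiv.Perm X}
    (hg : g ∈ structSet P Q) (hf : f ∈ structSet P Q) : IsFiberTranslation Q ⇑⁅g, f⁆ := by
  intro x y
  obtain ⟨u, rfl⟩ := (f * g).surjective x
  obtain ⟨v, rfl⟩ := (f * g).surjective y
  simpa [commutatorElement_def] using joinQuad_commutator_mem hQ hg hf u v

theorem IsFiberTranslation.commute (h : IsStrongParallelepiped P Q) {c k : Equiv.Perm X}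
    (hc : IsFiberTranslation Q c) (hk : k ∈ structSet P Q) : Commute k c := by
  refine Equiv.ext fun x => ?_
  have hx : (x, x, x, c x) ∈ P := h.1.mem_of_joinQuad_mem (hc x x)
  exact h.eq_of_joinQuad_mem (hk _ hx).1 (h.1.joinQuad_trans (hk _ hx).2 (hc x (k x)))

theorem commutator_commutator_eq_bot (h : IsStrongParallelepiped P Q)
    {H : Subgroup (Equiv.Perm X)} (hH : (H : Set (Equiv.Perm X)) ⊆ structSet P Q) :
    ⁅H, ⁅H, H⁆⁆ = ⊥ := by
  rw [Subgroup.commutator_comm, Subgroup.commutator_eq_bot_iff_le_centralizer,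
    Subgroup.commutator_le]
  intro g hg f hf k hk
  exact ((isFiberTranslation_commutator h.1 (hH hg) (hH hf)).commute h (hH hk)).eq

end StructureGroup

theorem structure_group_two_step_nilpotent_general (X : Type)
    (P : Set (Quad X)) (Q : Set (Cube X)) (h : IsStrongParallelepiped P Q) :
    (∃ H : Subgroup (Equiv.Perm X), (H : Set (Equiv.Perm X)) = structSet P Q) ∧
    (∀ H : Subgroup (Equiv.Perm X), (H : Set (Equiv.Perm X)) = structSet P Q →
      ⁅H, ⁅H, H⁆⁆ = ⊥) :=
  ⟨⟨structGroup h.1, rfl⟩, fun _ hH => commutator_commutator_eq_bot h hH.subset⟩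

/-- The structure group of a strong parallelepiped structure is a group,
and it is `2`-step nilpotent: its second commutator subgroup `[𝒢,[𝒢,𝒢]]` is trivial. -/
theorem structure_group_two_step_nilpotent (X : Type) [Nonempty X]
    (P : Set (Quad X)) (Q : Set (Cube X)) (h : IsStrongParallelepiped P Q) :
    (∃ H : Subgroup (Equiv.Perm X), (H : Set (Equiv.Perm X)) = structSet P Q) ∧
    (∀ H : Subgroup (Equiv.Perm X), (H : Set (Equiv.Perm X)) = structSet P Q →
      ⁅H, ⁅H, H⁆⁆ = ⊥) :=
  structure_group_two_step_nilpotent_general X P Q h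

end HK
end
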